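/- arXiv:2103.08939 — 2 statements merged into one kernel-verified Lean document; each statement's English description precedes it below -/
import Mathlib

section
/- If the H-module algebra A is commutative, then its star product is braided commutative: a ⋆ b = Σ (Rₖ • b) ⋆ (Rᵏ • a) for all a, b ∈ A, where R⁻¹ = Σ Rₖ ⊗ Rᵏ is the inverse of the R-matrix. -/
open TensorProduct

noncomputable section

/-- The generic "twisted bilinear map": given `H`-actions on `A` and `B`, a bilinear map
`mu : A →ₗ B →ₗ C` and an element `T = Σ T₁ ⊗ T₂` of `H ⊗ H`, this is the bilinear map
`(a, b) ↦ Σ mu (T₁ • a) (T₂ • b)`. -/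
def twistBil {k H A B C : Type*} [CommRing k] [Ring H] [Algebra k H]
    [AddCommGroup A] [Module k A] [AddCommGroup B] [Module k B]
    [AddCommGroup C] [Module k C]
    (actA : H →ₗ[k] A →ₗ[k] A) (actB : H →ₗ[k] B →ₗ[k] B)
    (mu : A →ₗ[k] B →ₗ[k] C) (T : H ⊗[k] H) : A →ₗ[k] B →ₗ[k] C :=
  TensorProduct.curry (TensorProduct.lift mu ∘ₗ
    (TensorProduct.homTensorHomMap (RingHom.id k) A B A B ∘ₗ TensorProduct.map actA actB) T)

/-- A Drinfel'd twist on a Hopf algebra `H`: an invertible element `F` of `H ⊗ H`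
(with specified inverse `Finv`) satisfying the 2-cocycle condition
`(F ⊗ 1)·((Δ ⊗ id)(F)) = (1 ⊗ F)·((id ⊗ Δ)(F))` and the normalization condition
`(ε ⊗ id)(F) = 1 = (id ⊗ ε)(F)`. -/
def IsDrinfeldTwist {k H : Type*} [CommRing k] [Ring H] [HopfAlgebra k H]
    (F Finv : H ⊗[k] H) : Prop :=
  F * Finv = 1 ∧ Finv * F = 1 ∧
  TensorProduct.map LinearMap.id ((TensorProduct.mk k H H).flip 1) F *
      TensorProduct.assoc k H H H ((Coalgebra.comul (R := k) (A := H)).rTensor H F) =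
    ((1 : H) ⊗ₜ[k] F) * (Coalgebra.comul (R := k) (A := H)).lTensor H F ∧
  TensorProduct.lid k H ((Coalgebra.counit (R := k) (A := H)).rTensor H F) = 1 ∧
  TensorProduct.rid k H ((Coalgebra.counit (R := k) (A := H)).lTensor H F) = 1

/-- The twisted comultiplication `Δ_F(x) := F · Δ(x) · F⁻¹`, as a `k`-linear map. -/
def comulF {k H : Type*} [CommRing k] [Ring H] [HopfAlgebra k H]
    (F Finv : H ⊗[k] H) : H →ₗ[k] H ⊗[k] H :=
  LinearMap.mulRight k Finv ∘ₗ LinearMap.mulLeft k F ∘ₗ Coalgebra.comul (R := k)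

/-- The `R`-matrix `R := τ(F) · F⁻¹` of a Drinfel'd twist. -/
def Rmat {k H : Type*} [CommRing k] [Ring H] [Algebra k H]
    (F Finv : H ⊗[k] H) : H ⊗[k] H :=
  TensorProduct.comm k H H F * Finv

/-- The inverse `R⁻¹ = F · τ(F⁻¹)` of the `R`-matrix of a Drinfel'd twist; written
`R⁻¹ = Σ Rₖ ⊗ Rᵏ`. -/
def RmatInv {k H : Type*} [CommRing k] [Ring H] [Algebra k H]
    (F Finv : H ⊗[k] H) : H ⊗[k] H :=
  F * TensorProduct.comm k H H Finv

/-- `H` is cocommutative if `τ ∘ Δ = Δ`. -/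
def IsCocommutative (k H : Type*) [CommRing k] [Ring H] [HopfAlgebra k H] : Prop :=
  ∀ x : H, TensorProduct.comm k H H (Coalgebra.comul (R := k) x) = Coalgebra.comul (R := k) x

/-- For `T = Σ T₁ ⊗ T₂ ∈ H ⊗ H`, the element `T₁₂ = Σ T₁ ⊗ T₂ ⊗ 1` of `H ⊗ H ⊗ H`. -/
def leg12 {k H : Type*} [CommRing k] [Ring H] [Algebra k H]
    (T : H ⊗[k] H) : H ⊗[k] (H ⊗[k] H) :=
  TensorProduct.map LinearMap.id ((TensorProduct.mk k H H).flip 1) T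

/-- For `T = Σ T₁ ⊗ T₂ ∈ H ⊗ H`, the element `T₁₃ = Σ T₁ ⊗ 1 ⊗ T₂` of `H ⊗ H ⊗ H`. -/
def leg13 {k H : Type*} [CommRing k] [Ring H] [Algebra k H]
    (T : H ⊗[k] H) : H ⊗[k] (H ⊗[k] H) :=
  TensorProduct.map LinearMap.id (TensorProduct.mk k H H 1) T

/-- For `T ∈ H ⊗ H`, the element `T₂₃ = 1 ⊗ T` of `H ⊗ H ⊗ H`. -/
def leg23 {k H : Type*} [CommRing k] [Ring H] [Algebra k H]
    (T : H ⊗[k] H) : H ⊗[k] (H ⊗[k] H) :=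
  (1 : H) ⊗ₜ[k] T

/-- A (k-bilinear) left `H`-action: `(gh) • a = g • (h • a)` and `1 • a = a`. -/
def IsHAction {k H A : Type*} [CommRing k] [Ring H] [Algebra k H]
    [AddCommGroup A] [Module k A] (act : H →ₗ[k] A →ₗ[k] A) : Prop :=
  (∀ (g h : H) (a : A), act (g * h) a = act g (act h a)) ∧ ∀ a : A, act 1 a = a

/-- An `H`-module algebra structure on `A`: a left `H`-action such that
`h • (a·b) = Σ (h⁽¹⁾ • a)·(h⁽²⁾ • b)` and `h • 1 = ε(h)·1`. -/
def IsModuleAlgebra {k H A : Type*} [CommRing k] [Ring H] [HopfAlgebra k H]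
    [Ring A] [Algebra k A] (act : H →ₗ[k] A →ₗ[k] A) : Prop :=
  IsHAction act ∧
  (∀ (h : H) (a b : A),
    act h (a * b) = twistBil act act (LinearMap.mul k A) (Coalgebra.comul (R := k) h) a b) ∧
  ∀ h : H, act h 1 = Coalgebra.counit (R := k) h • (1 : A)

/-- The star product `a ⋆ b := Σ (f̄ᵏ • a)·(f̄ₖ • b)` on an `H`-module algebra,
as a bilinear map; here `Finv = Σ f̄ᵏ ⊗ f̄ₖ` is the inverse of the twist. -/
def starBil {k H A : Type*} [CommRing k] [Ring H] [Algebra k H]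
    [Ring A] [Algebra k A] (act : H →ₗ[k] A →ₗ[k] A) (Finv : H ⊗[k] H) :
    A →ₗ[k] A →ₗ[k] A :=
  twistBil act act (LinearMap.mul k A) Finv

/-- The Lie bracket of a Lie algebra `g` over `k`, as a bilinear map. -/
def lieBil (k g : Type*) [CommRing k] [LieRing g] [LieAlgebra k g] : g →ₗ[k] g →ₗ[k] g :=
  LinearMap.mk₂ k (fun x y => ⁅x, y⁆) add_lie smul_lie lie_add lie_smul

/-- An `H`-equivariant Lie algebra structure: a left `H`-action on the Lie algebra `g`
such that `h • ⁅a, b⁆ = Σ ⁅h⁽¹⁾ • a, h⁽²⁾ • b⁆`. -/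
def IsEquivLieAlgebra {k H g : Type*} [CommRing k] [Ring H] [HopfAlgebra k H]
    [LieRing g] [LieAlgebra k g] (act : H →ₗ[k] g →ₗ[k] g) : Prop :=
  IsHAction act ∧
  ∀ (h : H) (a b : g),
    act h ⁅a, b⁆ = twistBil act act (lieBil k g) (Coalgebra.comul (R := k) h) a b

/-- The twisted bracket `[a, b]⋆ := Σ ⁅f̄ᵏ • a, f̄ₖ • b⁆` on an `H`-equivariant Lie algebra. -/
def lieStar {k H g : Type*} [CommRing k] [Ring H] [Algebra k H]
    [LieRing g] [LieAlgebra k g] (act : H →ₗ[k] g →ₗ[k] g) (Finv : H ⊗[k] H) :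
    g →ₗ[k] g →ₗ[k] g :=
  twistBil act act (lieBil k g) Finv

/-- The twisted antipode `S_F(x) := u · S(x) · u⁻¹` with `u := Σ fᵏ·S(fₖ)` and
`u⁻¹ = Σ S(f̄ᵏ)·f̄ₖ`. -/
def antipodeF {k H : Type*} [CommRing k] [Ring H] [HopfAlgebra k H]
    (F Finv : H ⊗[k] H) : H →ₗ[k] H :=
  LinearMap.mulRight k
      (LinearMap.mul' k H ((HopfAlgebra.antipode (R := k)).rTensor H Finv)) ∘ₗ
    LinearMap.mulLeft k
      (LinearMap.mul' k H ((HopfAlgebra.antipode (R := k)).lTensor H F)) ∘ₗ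
    HopfAlgebra.antipode (R := k)

end

/-!
Acting twice, first with `R⁻¹` and then with `F⁻¹` as in `⋆`, is acting once with the product
`F⁻¹ · R⁻¹ = F⁻¹ · F · τ(F⁻¹) = τ(F⁻¹)`. Twisting the multiplication by `τ(F⁻¹)` and swapping
the arguments is twisting the opposite multiplication by `F⁻¹`, which is `⋆` itself when `A` is
commutative.
-/

section TwistBil

variable {k H A B C : Type*} [CommRing k] [Ring H] [Algebra k H]
    [AddCommGroup A] [Module k A] [AddCommGroup B] [Module k B]
    [AddCommGroup C] [Module k C]
    (actA : H →ₗ[k] A →ₗ[k] A) (actB : H →ₗ[k] B →ₗ[k] B)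
    (mu : A →ₗ[k] B →ₗ[k] C)

@[simp]
lemma twistBil_zero (a : A) (b : B) : twistBil actA actB mu 0 a b = 0 := by
  simp [twistBil]

@[simp]
lemma twistBil_tmul (x y : H) (a : A) (b : B) :
    twistBil actA actB mu (x ⊗ₜ y) a b = mu (actA x a) (actB y b) := by
  simp [twistBil]

lemma twistBil_add (T S : H ⊗[k] H) (a : A) (b : B) :
    twistBil actA actB mu (T + S) a b
      = twistBil actA actB mu T a b + twistBil actA actB mu S a b := by
  simp [twistBil]

lemma twistBil_flip (T : H ⊗[k] H) (a : A) (b : B) :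
    twistBil actA actB mu T a b
      = twistBil actB actA mu.flip (TensorProduct.comm k H H T) b a := by
  induction T using TensorProduct.induction_on with
  | zero => simp
  | tmul x y => simp
  | add T S hT hS => rw [twistBil_add, map_add, twistBil_add, hT, hS]

lemma twistBil_twistBil
    (hA : ∀ (g h : H) (a : A), actA (g * h) a = actA g (actA h a))
    (hB : ∀ (g h : H) (b : B), actB (g * h) b = actB g (actB h b))
    (T S : H ⊗[k] H) (a : A) (b : B) :
    twistBil actA actB (twistBil actA actB mu T) S a b = twistBil actA actB mu (T * S) a b := by
  induction S using TensorProduct.induction_on with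
  | zero => simp
  | add S₁ S₂ h₁ h₂ => rw [mul_add, twistBil_add, twistBil_add, h₁, h₂]
  | tmul s₁ s₂ =>
    rw [twistBil_tmul]
    induction T using TensorProduct.induction_on with
    | zero => simp
    | add T₁ T₂ h₁ h₂ => rw [twistBil_add, add_mul, twistBil_add, h₁, h₂]
    | tmul t₁ t₂ =>
      rw [twistBil_tmul, Algebra.TensorProduct.tmul_mul_tmul, twistBil_tmul, hA, hB]

end TwistBil

lemma mul_RmatInv {k H : Type*} [CommRing k] [Ring H] [Algebra k H] {F Finv : H ⊗[k] H}
    (h : Finv * F = 1) : Finv * RmatInv F Finv = TensorProduct.comm k H H Finv := by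
  rw [RmatInv, ← mul_assoc, h, one_mul]

/-- If the `H`-module algebra `A` is commutative, then its star product is
braided commutative: `a ⋆ b = Σ (Rₖ • b) ⋆ (Rᵏ • a)` with `R⁻¹ = Σ Rₖ ⊗ Rᵏ`. -/
theorem starBil_braided_comm {k H A : Type*} [CommRing k] [Ring H] [HopfAlgebra k H]
    [Ring A] [Algebra k A] (act : H →ₗ[k] A →ₗ[k] A) (hact : IsModuleAlgebra act)
    (hcomm : ∀ a b : A, a * b = b * a)
    (F Finv : H ⊗[k] H) (hF : IsDrinfeldTwist F Finv) :
    ∀ a b : A, starBil act Finv a b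
      = twistBil act act (starBil act Finv) (RmatInv F Finv) b a := by
  intro a b
  have hmul_flip : (LinearMap.mul k A).flip = LinearMap.mul k A :=
    LinearMap.ext₂ fun x y => hcomm y x
  rw [starBil, twistBil_twistBil act act _ hact.1.1 hact.1.1, mul_RmatInv hF.2.1,
    twistBil_flip act act _ Finv a b, hmul_flip]
end

section
/- If H is cocommutative and an H-equivariant Lie algebra g acts on an H-module algebra A by H-equivariant derivations, then the twisted action is a braided derivation of the star product: ξ ⋅⋆ (a ⋆ b) = (ξ ⋅⋆ a) ⋆ b + Σ (Rₖ • a) ⋆ ((Rᵏ • ξ) ⋅⋆ b) for all ξ ∈ g and a, b ∈ A, where R⁻¹ = Σ Rₖ ⊗ Rᵏ is the inverse of the R-matrix. -/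
open TensorProduct

/-!
Both sides are sums of the trilinear maps `(ξ, a, b) ↦ ρ ξ a * b` and `(a, ξ, b) ↦ a * ρ ξ b`
twisted by elements of `H ⊗ H ⊗ H`. Equivariance turns an iterated twisted map into a single
one, twisted by `(id ⊗ Δ)(T)·S₂₃` or by `(Δ ⊗ id)(T)·S₁₂`, and the derivation rule splits
`ξ ⋅⋆ (a ⋆ b)` into the two maps twisted by `X = (id ⊗ Δ)(F⁻¹)·F⁻¹₂₃`, the second one with the
first two legs of `X` swapped. The inverted cocycle condition `X = (Δ ⊗ id)(F⁻¹)·F⁻¹₁₂` identifies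
the first piece with `(ξ ⋅⋆ a) ⋆ b`. By cocommutativity, swapping the first two legs of
`(Δ ⊗ id)(F⁻¹)` does nothing, so swapping them in `X` gives `X·(R⁻¹)₁₂`, which is the braided term.
-/

section TwistedMaps

variable {k H : Type*} [CommRing k] [Ring H] [Algebra k H]
  {M N P B D E : Type*} [AddCommGroup M] [Module k M] [AddCommGroup N] [Module k N]
  [AddCommGroup P] [Module k P] [AddCommGroup B] [Module k B] [AddCommGroup D] [Module k D]
  [AddCommGroup E] [Module k E]
  {actM : H →ₗ[k] M →ₗ[k] M} {actN : H →ₗ[k] N →ₗ[k] N} {actB : H →ₗ[k] B →ₗ[k] B}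
  {actD : H →ₗ[k] D →ₗ[k] D}

@[simp]
theorem twistBil_tmul_s16 (mu : M →ₗ[k] B →ₗ[k] P) (s t : H) (x : M) (y : B) :
    twistBil actM actB mu (s ⊗ₜ[k] t) x y = mu (actM s x) (actB t y) := by
  simp [twistBil]

@[simp]
theorem twistBil_zero_s16 (mu : M →ₗ[k] B →ₗ[k] P) (x : M) (y : B) :
    twistBil actM actB mu 0 x y = 0 := by
  simp [twistBil]

@[simp]
theorem twistBil_add_s16 (mu : M →ₗ[k] B →ₗ[k] P) (T T' : H ⊗[k] H) (x : M) (y : B) :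
    twistBil actM actB mu (T + T') x y =
      twistBil actM actB mu T x y + twistBil actM actB mu T' x y := by
  simp [twistBil]

theorem twistBil_mul_tmul (hM : ∀ (s t : H) (x : M), actM (s * t) x = actM s (actM t x))
    (hB : ∀ (s t : H) (y : B), actB (s * t) y = actB s (actB t y))
    (mu : M →ₗ[k] B →ₗ[k] P) (U : H ⊗[k] H) (s t : H) (x : M) (y : B) :
    twistBil actM actB mu (U * (s ⊗ₜ[k] t)) x y =
      twistBil actM actB mu U (actM s x) (actB t y) := by
  induction U using TensorProduct.induction_on with
  | zero => simp
  | tmul u u' => simp [hM, hB]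
  | add U U' hU hU' => simp [add_mul, hU, hU']

def trilinRight (mu : M →ₗ[k] N →ₗ[k] P) (nu : B →ₗ[k] D →ₗ[k] N) :
    M →ₗ[k] B →ₗ[k] D →ₗ[k] P :=
  LinearMap.lcomp k (D →ₗ[k] P) nu ∘ₗ LinearMap.llcomp k D N P ∘ₗ mu

def trilinLeft (mu : N →ₗ[k] D →ₗ[k] P) (nu : M →ₗ[k] B →ₗ[k] N) :
    M →ₗ[k] B →ₗ[k] D →ₗ[k] P :=
  LinearMap.llcomp k B N (D →ₗ[k] P) mu ∘ₗ nu

@[simp]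
theorem trilinRight_apply (mu : M →ₗ[k] N →ₗ[k] P) (nu : B →ₗ[k] D →ₗ[k] N) (x : M) (y : B)
    (z : D) : trilinRight mu nu x y z = mu x (nu y z) :=
  rfl

@[simp]
theorem trilinLeft_apply (mu : N →ₗ[k] D →ₗ[k] P) (nu : M →ₗ[k] B →ₗ[k] N) (x : M) (y : B)
    (z : D) : trilinLeft mu nu x y z = mu (nu x y) z :=
  rfl

def twistTril (actM : H →ₗ[k] M →ₗ[k] M) (actB : H →ₗ[k] B →ₗ[k] B)
    (actD : H →ₗ[k] D →ₗ[k] D) (ν : M →ₗ[k] B →ₗ[k] D →ₗ[k] E) (x : M) (y : B) (z : D) :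
    H ⊗[k] (H ⊗[k] H) →ₗ[k] E :=
  TensorProduct.lift (TensorProduct.uncurry (RingHom.id k) B D E ∘ₗ ν) ∘ₗ
    TensorProduct.map (actM.flip x) (TensorProduct.map (actB.flip y) (actD.flip z))

@[simp]
theorem twistTril_tmul (ν : M →ₗ[k] B →ₗ[k] D →ₗ[k] E) (x : M) (y : B) (z : D) (r s t : H) :
    twistTril actM actB actD ν x y z (r ⊗ₜ[k] (s ⊗ₜ[k] t)) =
      ν (actM r x) (actB s y) (actD t z) := by
  simp [twistTril]

theorem twistTril_add (ν ν' : M →ₗ[k] B →ₗ[k] D →ₗ[k] E) (x : M) (y : B) (z : D) :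
    twistTril actM actB actD (ν + ν') x y z =
      twistTril actM actB actD ν x y z + twistTril actM actB actD ν' x y z :=
  TensorProduct.ext_threefold' fun r s t => by simp

theorem twistTril_mul_tmul_one (hM : ∀ (s t : H) (x : M), actM (s * t) x = actM s (actM t x))
    (hB : ∀ (s t : H) (y : B), actB (s * t) y = actB s (actB t y))
    (ν : M →ₗ[k] B →ₗ[k] D →ₗ[k] E) (X : H ⊗[k] (H ⊗[k] H)) (r s : H) (x : M) (y : B) (z : D) :
    twistTril actM actB actD ν x y z (X * (r ⊗ₜ[k] (s ⊗ₜ[k] 1))) =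
      twistTril actM actB actD ν (actM r x) (actB s y) z X := by
  induction X using TensorProduct.induction_on with
  | zero => simp
  | tmul u V =>
    induction V using TensorProduct.induction_on with
    | zero => simp
    | tmul v w => simp [hM, hB]
    | add V V' hV hV' => simp only [tmul_add, add_mul, map_add, hV, hV']
  | add X X' hX hX' => simp only [add_mul, map_add, hX, hX']

theorem twistTril_flip (ν : M →ₗ[k] B →ₗ[k] D →ₗ[k] E) (x : M) (y : B) (z : D)
    (X : H ⊗[k] (H ⊗[k] H)) :
    twistTril actB actM actD ν.flip y x z X =
      twistTril actM actB actD ν x y z (Algebra.TensorProduct.leftComm k H H H X) := by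
  have h : twistTril actB actM actD ν.flip y x z =
      twistTril actM actB actD ν x y z ∘ₗ
        (Algebra.TensorProduct.leftComm k H H H).toLinearMap :=
    TensorProduct.ext_threefold' fun r s t => by simp
  exact LinearMap.congr_fun h X

theorem twistTril_trilinRight_tmul (mu : M →ₗ[k] N →ₗ[k] P) (nu : B →ₗ[k] D →ₗ[k] N)
    (t : H) (W : H ⊗[k] H) (x : M) (y : B) (z : D) :
    twistTril actM actB actD (trilinRight mu nu) x y z (t ⊗ₜ[k] W) =
      mu (actM t x) (twistBil actB actD nu W y z) := by
  induction W using TensorProduct.induction_on with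
  | zero => simp
  | tmul s s' => simp
  | add W W' hW hW' => simp [tmul_add, hW, hW']

theorem twistTril_trilinLeft_assoc_tmul (mu : N →ₗ[k] D →ₗ[k] P) (nu : M →ₗ[k] B →ₗ[k] N)
    (W : H ⊗[k] H) (t : H) (x : M) (y : B) (z : D) :
    twistTril actM actB actD (trilinLeft mu nu) x y z (TensorProduct.assoc k H H H (W ⊗ₜ t)) =
      mu (twistBil actM actB nu W x y) (actD t z) := by
  induction W using TensorProduct.induction_on with
  | zero => simp
  | tmul s s' => simp
  | add W W' hW hW' => simp [add_tmul, hW, hW']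

end TwistedMaps

section Legs

variable {k H : Type*} [CommRing k] [Ring H] [Algebra k H]

theorem TensorProduct.assoc_mul (u v : (H ⊗[k] H) ⊗[k] H) :
    TensorProduct.assoc k H H H (u * v) =
      TensorProduct.assoc k H H H u * TensorProduct.assoc k H H H v :=
  map_mul (Algebra.TensorProduct.assoc k k k H H H) u v

@[simp]
theorem leg12_tmul (s t : H) : leg12 (s ⊗ₜ[k] t) = s ⊗ₜ[k] (t ⊗ₜ[k] (1 : H)) :=
  rfl

theorem leg12_one : leg12 (1 : H ⊗[k] H) = 1 :=
  rfl

theorem leg12_eq_assoc (T : H ⊗[k] H) : leg12 T = TensorProduct.assoc k H H H (T ⊗ₜ[k] 1) := by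
  induction T using TensorProduct.induction_on with
  | zero => simp [leg12]
  | tmul s s' => rfl
  | add S S' hS hS' => simp only [leg12, map_add, add_tmul] at hS hS' ⊢; rw [hS, hS']

theorem leg12_mul (S T : H ⊗[k] H) : leg12 (S * T) = leg12 S * leg12 T :=
  map_mul (Algebra.TensorProduct.map (AlgHom.id k H) Algebra.TensorProduct.includeLeft) S T

theorem leftComm_leg12 (T : H ⊗[k] H) :
    Algebra.TensorProduct.leftComm k H H H (leg12 T) = leg12 (TensorProduct.comm k H H T) := by
  induction T using TensorProduct.induction_on with
  | zero => simp [leg12]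
  | tmul s s' => rfl
  | add S S' hS hS' => simp only [leg12, map_add] at hS hS' ⊢; rw [hS, hS']

theorem leftComm_assoc_tmul (W : H ⊗[k] H) (t : H) :
    Algebra.TensorProduct.leftComm k H H H (TensorProduct.assoc k H H H (W ⊗ₜ[k] t)) =
      TensorProduct.assoc k H H H (TensorProduct.comm k H H W ⊗ₜ[k] t) := by
  induction W using TensorProduct.induction_on with
  | zero => simp
  | tmul s s' => rfl
  | add W W' hW hW' => simp only [add_tmul, map_add, hW, hW']

end Legs

section Bialgebra

variable {k H : Type*} [CommRing k] [Ring H] [Bialgebra k H]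
  {M N P B D : Type*} [AddCommGroup M] [Module k M] [AddCommGroup N] [Module k N]
  [AddCommGroup P] [Module k P] [AddCommGroup B] [Module k B] [AddCommGroup D] [Module k D]
  {actM : H →ₗ[k] M →ₗ[k] M} {actN : H →ₗ[k] N →ₗ[k] N} {actB : H →ₗ[k] B →ₗ[k] B}
  {actD : H →ₗ[k] D →ₗ[k] D}

theorem act_twistBil (hB : ∀ (s t : H) (y : B), actB (s * t) y = actB s (actB t y))
    (hD : ∀ (s t : H) (z : D), actD (s * t) z = actD s (actD t z))
    {nu : B →ₗ[k] D →ₗ[k] N}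
    (hnu : ∀ (h : H) (y : B) (z : D),
      actN h (nu y z) = twistBil actB actD nu (Coalgebra.comul (R := k) h) y z)
    (h : H) (S : H ⊗[k] H) (y : B) (z : D) :
    actN h (twistBil actB actD nu S y z) =
      twistBil actB actD nu (Coalgebra.comul (R := k) h * S) y z := by
  induction S using TensorProduct.induction_on with
  | zero => simp
  | tmul s s' => rw [twistBil_tmul_s16, hnu, twistBil_mul_tmul hB hD]
  | add S S' hS hS' => simp [mul_add, hS, hS']

theorem twistBil_twistBil_right (hB : ∀ (s t : H) (y : B), actB (s * t) y = actB s (actB t y))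
    (hD : ∀ (s t : H) (z : D), actD (s * t) z = actD s (actD t z))
    (mu : M →ₗ[k] N →ₗ[k] P) {nu : B →ₗ[k] D →ₗ[k] N}
    (hnu : ∀ (h : H) (y : B) (z : D),
      actN h (nu y z) = twistBil actB actD nu (Coalgebra.comul (R := k) h) y z)
    (T S : H ⊗[k] H) (x : M) (y : B) (z : D) :
    twistBil actM actN mu T x (twistBil actB actD nu S y z) =
      twistTril actM actB actD (trilinRight mu nu) x y z
        ((Coalgebra.comul (R := k) (A := H)).lTensor H T * leg23 S) := by
  induction T using TensorProduct.induction_on with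
  | zero => simp
  | tmul t t' =>
    rw [twistBil_tmul_s16, act_twistBil hB hD hnu, LinearMap.lTensor_tmul, leg23,
      Algebra.TensorProduct.tmul_mul_tmul, mul_one, twistTril_trilinRight_tmul]
  | add T T' hT hT' => simp [add_mul, hT, hT']

theorem twistBil_twistBil_left (hM : ∀ (s t : H) (x : M), actM (s * t) x = actM s (actM t x))
    (hB : ∀ (s t : H) (y : B), actB (s * t) y = actB s (actB t y))
    (mu : N →ₗ[k] D →ₗ[k] P) {nu : M →ₗ[k] B →ₗ[k] N}
    (hnu : ∀ (h : H) (x : M) (y : B),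
      actN h (nu x y) = twistBil actM actB nu (Coalgebra.comul (R := k) h) x y)
    (T S : H ⊗[k] H) (x : M) (y : B) (z : D) :
    twistBil actN actD mu T (twistBil actM actB nu S x y) z =
      twistTril actM actB actD (trilinLeft mu nu) x y z
        (TensorProduct.assoc k H H H ((Coalgebra.comul (R := k) (A := H)).rTensor H T) *
          leg12 S) := by
  induction T using TensorProduct.induction_on with
  | zero => simp
  | tmul t t' =>
    rw [twistBil_tmul_s16, act_twistBil hM hB hnu, LinearMap.rTensor_tmul, leg12_eq_assoc,
      ← TensorProduct.assoc_mul, Algebra.TensorProduct.tmul_mul_tmul, mul_one]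
    exact (twistTril_trilinLeft_assoc_tmul mu nu _ t' x y z).symm
  | add T T' hT hT' => simp [add_mul, hT, hT']

theorem twistBil_compl₂_twistBil
    (hM : ∀ (s t : H) (x : M), actM (s * t) x = actM s (actM t x))
    (hB : ∀ (s t : H) (y : B), actB (s * t) y = actB s (actB t y))
    (hD : ∀ (s t : H) (z : D), actD (s * t) z = actD s (actD t z))
    (mu : M →ₗ[k] N →ₗ[k] P) {nu : B →ₗ[k] D →ₗ[k] N}
    (hnu : ∀ (h : H) (y : B) (z : D),
      actN h (nu y z) = twistBil actB actD nu (Coalgebra.comul (R := k) h) y z)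
    (R S S' : H ⊗[k] H) (x : M) (y : B) (z : D) :
    twistBil actM actB ((twistBil actM actN mu S).compl₂ ((twistBil actB actD nu S').flip z))
        R x y =
      twistTril actM actB actD (trilinRight mu nu) x y z
        ((Coalgebra.comul (R := k) (A := H)).lTensor H S * leg23 S' * leg12 R) := by
  induction R using TensorProduct.induction_on with
  | zero => simp [leg12]
  | tmul r r' =>
    rw [twistBil_tmul_s16, LinearMap.compl₂_apply, LinearMap.flip_apply,
      twistBil_twistBil_right hB hD mu hnu, leg12_tmul, twistTril_mul_tmul_one hM hB]
  | add R R' hR hR' => simp only [twistBil_add_s16, hR, hR', leg12, map_add, mul_add]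

end Bialgebra

section Twist

variable {k H : Type*} [CommRing k] [Ring H] [HopfAlgebra k H] {F Finv : H ⊗[k] H}

theorem IsCocommutative.leftComm_assoc_rTensor_comul (hcc : IsCocommutative k H)
    (T : H ⊗[k] H) :
    Algebra.TensorProduct.leftComm k H H H
        (TensorProduct.assoc k H H H ((Coalgebra.comul (R := k) (A := H)).rTensor H T)) =
      TensorProduct.assoc k H H H ((Coalgebra.comul (R := k) (A := H)).rTensor H T) := by
  induction T using TensorProduct.induction_on with
  | zero => simp
  | tmul t t' => rw [LinearMap.rTensor_tmul, leftComm_assoc_tmul, hcc]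
  | add T T' hT hT' => simp only [map_add, hT, hT']

theorem IsDrinfeldTwist.inv_cocycle (hF : IsDrinfeldTwist F Finv) :
    (Coalgebra.comul (R := k) (A := H)).lTensor H Finv * leg23 Finv =
      TensorProduct.assoc k H H H ((Coalgebra.comul (R := k) (A := H)).rTensor H Finv) *
        leg12 Finv := by
  obtain ⟨hFFinv, hFinvF, hcocycle, -, -⟩ := hF
  change leg12 F * _ = leg23 F * _ at hcocycle
  -- the four factors of the cocycle condition are images of `F` under algebra maps
  have hinv (φ : H ⊗[k] H →ₐ[k] H ⊗[k] (H ⊗[k] H)) : φ F * φ Finv = 1 ∧ φ Finv * φ F = 1 :=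
    ⟨by rw [← map_mul, hFFinv, map_one], by rw [← map_mul, hFinvF, map_one]⟩
  have h12 : leg12 F * leg12 Finv = 1 :=
    (hinv (Algebra.TensorProduct.map (AlgHom.id k H) Algebra.TensorProduct.includeLeft)).1
  have h23 : leg23 Finv * leg23 F = 1 := (hinv Algebra.TensorProduct.includeRight).2
  have hΔ₁ : TensorProduct.assoc k H H H ((Coalgebra.comul (R := k) (A := H)).rTensor H F) *
      TensorProduct.assoc k H H H ((Coalgebra.comul (R := k) (A := H)).rTensor H Finv) = 1 :=
    (hinv ((Algebra.TensorProduct.assoc k k k H H H).toAlgHom.comp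
      (Algebra.TensorProduct.map (Bialgebra.comulAlgHom k H) (AlgHom.id k H)))).1
  have hΔ₂ : (Coalgebra.comul (R := k) (A := H)).lTensor H Finv *
      (Coalgebra.comul (R := k) (A := H)).lTensor H F = 1 :=
    (hinv (Algebra.TensorProduct.map (AlgHom.id k H) (Bialgebra.comulAlgHom k H))).2
  refine left_inv_eq_right_inv (a := leg23 F * (Coalgebra.comul (R := k) (A := H)).lTensor H F)
    ?_ ?_
  · rw [mul_assoc, ← mul_assoc (leg23 Finv), h23, one_mul, hΔ₂]
  · rw [← hcocycle, mul_assoc, ← mul_assoc (TensorProduct.assoc k H H H _), hΔ₁, one_mul, h12]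

theorem IsDrinfeldTwist.leftComm_inv_cocycle (hF : IsDrinfeldTwist F Finv)
    (hcc : IsCocommutative k H) :
    Algebra.TensorProduct.leftComm k H H H
        ((Coalgebra.comul (R := k) (A := H)).lTensor H Finv * leg23 Finv) =
      (Coalgebra.comul (R := k) (A := H)).lTensor H Finv * leg23 Finv *
        leg12 (RmatInv F Finv) := by
  rw [hF.inv_cocycle, map_mul, hcc.leftComm_assoc_rTensor_comul, leftComm_leg12, RmatInv,
    leg12_mul, ← mul_assoc, mul_assoc _ (leg12 Finv), ← leg12_mul, hF.2.1, leg12_one, mul_one]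

end Twist

/-- If `H` is cocommutative and an `H`-equivariant Lie algebra `g` acts on an
`H`-module algebra `A` by `H`-equivariant derivations, then the twisted action is a braided
derivation of the star product:
`ξ ⋅⋆ (a ⋆ b) = (ξ ⋅⋆ a) ⋆ b + Σ (Rₖ • a) ⋆ ((Rᵏ • ξ) ⋅⋆ b)` with `R⁻¹ = Σ Rₖ ⊗ Rᵏ`. -/
theorem twisted_action_braided_derivation {k H g A : Type*} [CommRing k] [Ring H]
    [HopfAlgebra k H] [LieRing g] [LieAlgebra k g] [Ring A] [Algebra k A]
    (act : H →ₗ[k] A →ₗ[k] A) (hA : IsModuleAlgebra act)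
    (actg : H →ₗ[k] g →ₗ[k] g) (hg : IsEquivLieAlgebra actg)
    (ρ : g →ₗ[k] A →ₗ[k] A)
    (hder : ∀ (ξ : g) (a b : A), ρ ξ (a * b) = ρ ξ a * b + a * ρ ξ b)
    (hequiv : ∀ (h : H) (ξ : g) (a : A),
      act h (ρ ξ a) = twistBil actg act ρ (Coalgebra.comul (R := k) h) ξ a)
    (F Finv : H ⊗[k] H) (hF : IsDrinfeldTwist F Finv) (hcc : IsCocommutative k H) :
    ∀ (ξ : g) (a b : A),
      twistBil actg act ρ Finv ξ (starBil act Finv a b)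
        = starBil act Finv (twistBil actg act ρ Finv ξ a) b
          + twistBil act actg
              ((starBil act Finv).compl₂ ((twistBil actg act ρ Finv).flip b))
              (RmatInv F Finv) a ξ := by
  intro ξ a b
  obtain ⟨⟨hact, -⟩, hmul, -⟩ := hA
  obtain ⟨⟨hactg, -⟩, -⟩ := hg
  have hsplit : trilinRight ρ (LinearMap.mul k A) =
      trilinLeft (LinearMap.mul k A) ρ + (trilinRight (LinearMap.mul k A) ρ).flip := by
    ext ξ a b
    simp [hder]
  rw [starBil, twistBil_twistBil_right hact hact ρ hmul, hsplit, twistTril_add,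
    LinearMap.add_apply, twistTril_flip, twistBil_twistBil_left hactg hact _ hequiv,
    twistBil_compl₂_twistBil hact hactg hact _ hequiv, hF.leftComm_inv_cocycle hcc,
    hF.inv_cocycle]
end
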